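/- arXiv:0812.0870 — 2 statements merged into one kernel-verified Lean document; each statement's English description precedes it below -/
import Mathlib

section
/- The simple graph G on vertex set {1,2,3,4,5,6,7} with edge set {{1,2},{1,3},{2,3},{2,4},{2,5},{3,4},{3,6},{3,7},{4,5},{5,6},{5,7},{6,7}} (graph number 970 in the Atlas of Graphs) has minimum rank 3 over the real numbers. -/
/-!
The upper bound is a Gram matrix: seven vectors in `ℝ³`, orthogonal exactly along the
non-edges, give a matrix with the right pattern and rank at most `3`. For the lower bound,
rows `1, 4, 6` and columns `2, 5, 7` of any matrix with the pattern of the graph form a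
lower triangular `3 × 3` submatrix: its diagonal entries sit on the edges `12, 45, 67` and the
entries above it on the non-edges `15, 17, 47`. (Vertex `v` of the graph is `v - 1 : Fin 7`.)
-/

/-- Edge list of graph number 970 in the Atlas of Graphs (vertices 1..7). -/
def atlas970Edges : List (ℕ × ℕ) := [(1,2),(1,3),(2,3),(2,4),(2,5),(3,4),(3,6),(3,7),(4,5),(5,6),(5,7),(6,7)]

namespace Matrix

variable {K m n k : Type*} [Field K] [Fintype n] [Fintype k] [DecidableEq k]

theorem card_le_rank_of_det_submatrix_ne_zero (A : Matrix m n K) (r : k → m) (c : k → n)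
    (h : (A.submatrix r c).det ≠ 0) : Fintype.card k ≤ A.rank := by
  rw [← rank_of_isUnit _ ((isUnit_iff_isUnit_det _).mpr h.isUnit)]
  exact rank_submatrix_le A r c

theorem card_le_rank_of_isLowerTriangular_submatrix [LinearOrder k] (A : Matrix m n K)
    (r : k → m) (c : k → n) (hA : (A.submatrix r c).IsLowerTriangular)
    (hdiag : ∀ i, A (r i) (c i) ≠ 0) : Fintype.card k ≤ A.rank :=
  A.card_le_rank_of_det_submatrix_ne_zero r c <| by
    rw [det_of_isLowerTriangular _ hA]
    exact Finset.prod_ne_zero_iff.mpr fun i _ => hdiag i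

end Matrix

open Matrix

theorem three_le_rank_of_atlas970_pattern (A : Matrix (Fin 7) (Fin 7) ℝ)
    (hA : ∀ i j : Fin 7, i ≠ j →
      (A i j ≠ 0 ↔
        ((i.val + 1, j.val + 1) ∈ atlas970Edges ∨
         (j.val + 1, i.val + 1) ∈ atlas970Edges))) :
    3 ≤ A.rank := by
  have hzero : ∀ i j : Fin 7, i ≠ j →
      ¬((i.val + 1, j.val + 1) ∈ atlas970Edges ∨ (j.val + 1, i.val + 1) ∈ atlas970Edges) →
      A i j = 0 :=
    fun i j hij hnon => not_not.mp fun h => hnon ((hA i j hij).mp h)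
  simpa using A.card_le_rank_of_isLowerTriangular_submatrix ![0, 3, 5] ![1, 4, 6]
    (fun i j hij => by
      change i < j at hij
      fin_cases i <;> fin_cases j <;> first
        | exact absurd hij (by decide)
        | exact hzero _ _ (by decide) (by decide))
    (fun i => by fin_cases i <;> exact (hA _ _ (by decide)).mpr (by decide))

def atlas970Vectors : Matrix (Fin 7) (Fin 3) ℝ :=
  !![1, 0, 0; 1, 1, 0; 1, 1, -1; 0, 1, 0; 0, 1, 1; 0, 0, 1; 0, 0, 1]

def atlas970Gram : Matrix (Fin 7) (Fin 7) ℝ := atlas970Vectors * atlas970Vectorsᵀ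

theorem atlas970Gram_isSymm : atlas970Gram.IsSymm := by
  rw [atlas970Gram, IsSymm, transpose_mul, transpose_transpose]

theorem atlas970Gram_eq : atlas970Gram =
    !![1, 1,  1, 0, 0,  0,  0;
       1, 2,  2, 1, 1,  0,  0;
       1, 2,  3, 1, 0, -1, -1;
       0, 1,  1, 1, 1,  0,  0;
       0, 1,  0, 1, 2,  1,  1;
       0, 0, -1, 0, 1,  1,  1;
       0, 0, -1, 0, 1,  1,  1] := by
  ext i j
  fin_cases i <;> fin_cases j <;>
    norm_num [atlas970Gram, atlas970Vectors, mul_apply, Fin.sum_univ_succ]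

theorem atlas970Gram_pattern (i j : Fin 7) (hij : i ≠ j) :
    atlas970Gram i j ≠ 0 ↔
      ((i.val + 1, j.val + 1) ∈ atlas970Edges ∨ (j.val + 1, i.val + 1) ∈ atlas970Edges) := by
  rw [atlas970Gram_eq]
  fin_cases i <;> fin_cases j <;> simp_all [atlas970Edges]

theorem atlas970Gram_rank_le : atlas970Gram.rank ≤ 3 :=
  (rank_mul_le_left _ _).trans (rank_le_width _)

/-- Graph number 970 in the Atlas of Graphs has minimum rank 3 over the reals:
3 is the least element of the set of ranks of real symmetric 7×7 matrices whose
off-diagonal zero/nonzero pattern matches the edges of the graph. -/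
theorem atlas970_minRank_eq_three :
    IsLeast {r : ℕ | ∃ A : Matrix (Fin 7) (Fin 7) ℝ, A.IsSymm ∧
        (∀ i j : Fin 7, i ≠ j →
          (A i j ≠ 0 ↔
            ((i.val + 1, j.val + 1) ∈ atlas970Edges ∨
             (j.val + 1, i.val + 1) ∈ atlas970Edges))) ∧
        A.rank = r} 3 := by
  constructor
  · refine ⟨atlas970Gram, atlas970Gram_isSymm, atlas970Gram_pattern, ?_⟩
    exact atlas970Gram_rank_le.antisymm
      (three_le_rank_of_atlas970_pattern _ atlas970Gram_pattern)
  · rintro r ⟨A, -, hA, rfl⟩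
    exact three_le_rank_of_atlas970_pattern A hA
end

section
/- The simple graph G on vertex set {1,2,3,4,5,6,7} with edge set {{1,2},{1,4},{1,5},{2,3},{2,6},{2,7},{3,4},{3,5},{4,5},{5,6},{5,7},{6,7}} (graph number 995 in the Atlas of Graphs) has minimum rank 3 over the real numbers. -/
/-- Edge list of graph number 995 in the Atlas of Graphs (vertices 1..7). -/
def atlas995Edges : List (ℕ × ℕ) := [(1,2),(1,4),(1,5),(2,3),(2,6),(2,7),(3,4),(3,5),(4,5),(5,6),(5,7),(6,7)]

/-!
Upper bound: the Gram matrix of seven integer vectors in ℝ³ has the pattern of the graph and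
rank at most 3. Lower bound: rows 2, 3, 6 against columns 1, 4, 7 of any matrix with this
pattern form a triangular 3 × 3 minor with nonzero diagonal, since 2 ~ 1, 3 ~ 4 and 6 ~ 7
are edges while 3 ≁ 1, 6 ≁ 1, 2 ≁ 4, 6 ≁ 4 and 3 ≁ 7.
-/

open Matrix

theorem Matrix.card_le_rank_of_det_submatrix_ne_zero_s19 {l m n K : Type*} [Fintype m]
    [DecidableEq m] [Fintype n] [Field K] (A : Matrix l n K) (r : m → l) (c : m → n)
    (h : (A.submatrix r c).det ≠ 0) : Fintype.card m ≤ A.rank := by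
  rw [← rank_of_isUnit _ ((isUnit_iff_isUnit_det _).mpr h.isUnit)]
  exact rank_submatrix_le A r c

def HasAtlas995Pattern {R : Type*} [Zero R] (A : Matrix (Fin 7) (Fin 7) R) : Prop :=
  ∀ i j : Fin 7, i ≠ j →
    (A i j ≠ 0 ↔
      ((i.val + 1, j.val + 1) ∈ atlas995Edges ∨ (j.val + 1, i.val + 1) ∈ atlas995Edges))

namespace HasAtlas995Pattern

theorem map {R S : Type*} [Zero R] [Zero S] {A : Matrix (Fin 7) (Fin 7) R}
    (hA : HasAtlas995Pattern A) {f : R → S} (hf : ∀ x, f x = 0 ↔ x = 0) :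
    HasAtlas995Pattern (A.map f) :=
  fun i j hij => (not_congr (hf (A i j))).trans (hA i j hij)

theorem three_le_rank {K : Type*} [Field K] {A : Matrix (Fin 7) (Fin 7) K}
    (hA : HasAtlas995Pattern A) : 3 ≤ A.rank := by
  have adj {i j : Fin 7} (hij : i ≠ j)
      (h : (i.val + 1, j.val + 1) ∈ atlas995Edges ∨ (j.val + 1, i.val + 1) ∈ atlas995Edges) :
      A i j ≠ 0 :=
    (hA i j hij).mpr h
  have nonadj {i j : Fin 7} (hij : i ≠ j)
      (h : ¬((i.val + 1, j.val + 1) ∈ atlas995Edges ∨ (j.val + 1, i.val + 1) ∈ atlas995Edges)) :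
      A i j = 0 :=
    not_not.mp (mt (hA i j hij).mp h)
  have hdet : (A.submatrix ![1, 2, 5] ![0, 3, 6]).det = A 1 0 * A 2 3 * A 5 6 := by
    rw [det_fin_three]
    simp [nonadj (i := 2) (j := 0) (by decide) (by decide),
      nonadj (i := 5) (j := 0) (by decide) (by decide),
      nonadj (i := 1) (j := 3) (by decide) (by decide),
      nonadj (i := 5) (j := 3) (by decide) (by decide),
      nonadj (i := 2) (j := 6) (by decide) (by decide)]
  have hminor : (A.submatrix ![1, 2, 5] ![0, 3, 6]).det ≠ 0 := by
    rw [hdet]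
    refine mul_ne_zero (mul_ne_zero ?_ ?_) ?_ <;> exact adj (by decide) (by decide)
  simpa using A.card_le_rank_of_det_submatrix_ne_zero_s19 _ _ hminor

end HasAtlas995Pattern

def atlas995Vectors : Matrix (Fin 3) (Fin 7) ℤ :=
  !![1, 1, 0, 1, 1, 0, 0; 0, -1, 1, 1, 2, 0, 0; 0, 1, 0, 0, 1, 1, 1]

theorem hasAtlas995Pattern_gram_atlas995Vectors :
    HasAtlas995Pattern (atlas995Vectorsᵀ * atlas995Vectors) := by
  unfold HasAtlas995Pattern
  decide

/-- Graph number 995 in the Atlas of Graphs has minimum rank 3 over the reals: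
3 is the least element of the set of ranks of real symmetric 7×7 matrices whose
off-diagonal zero/nonzero pattern matches the edges of the graph. -/
theorem atlas995_minRank_eq_three :
    IsLeast {r : ℕ | ∃ A : Matrix (Fin 7) (Fin 7) ℝ, A.IsSymm ∧
        (∀ i j : Fin 7, i ≠ j →
          (A i j ≠ 0 ↔
            ((i.val + 1, j.val + 1) ∈ atlas995Edges ∨
             (j.val + 1, i.val + 1) ∈ atlas995Edges))) ∧
        A.rank = r} 3 := by
  set V : Matrix (Fin 3) (Fin 7) ℝ := atlas995Vectors.map (Int.castRingHom ℝ)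
  have hgram : Vᵀ * V = (atlas995Vectorsᵀ * atlas995Vectors).map (Int.castRingHom ℝ) := by
    rw [Matrix.map_mul, transpose_map]
  have hpattern : HasAtlas995Pattern (Vᵀ * V) :=
    hgram ▸ hasAtlas995Pattern_gram_atlas995Vectors.map fun x => by simp
  have hsymm : (Vᵀ * V).IsSymm := by rw [IsSymm, transpose_mul, transpose_transpose]
  have hrank : (Vᵀ * V).rank ≤ 3 := (rank_mul_le_right _ _).trans (rank_le_height V)
  refine ⟨⟨Vᵀ * V, hsymm, hpattern, le_antisymm hrank hpattern.three_le_rank⟩, ?_⟩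
  rintro r ⟨A, -, hA, rfl⟩
  exact HasAtlas995Pattern.three_le_rank hA
end
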